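/- Let A ∈ 𝒮ⁿ[k] be a Robinson matrix and let d ∈ 𝔻ᵏ satisfy the path condition for A. Then for every pair u,v ∈ [n], every (u,v)-upper-bound-walk W₁ and every (u,v)-lower-bound-walk W₂ satisfy β⁻(W₂)ᵀ d < β⁺(W₁)ᵀ d. -/

import Mathlib

/-- The standard unit vector `χ_t ∈ ℤᵏ` (as a function `ℕ → ℤ`, supported on index `t`). -/
def chi (t : ℕ) : ℕ → ℤ := fun i => if i = t then 1 else 0

/-- The dot product `bᵀ d = Σ_{i=1}^k b_i d_i`. -/
def dotProd (k : ℕ) (b : ℕ → ℤ) (d : ℕ → ℝ) : ℝ :=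
  ∑ i ∈ Finset.Icc 1 k, (b i : ℝ) * d i

/-- `A ∈ 𝒮ⁿ[k]`: a symmetric matrix with entries in `{0,…,k}`, diagonal `k`,
entries increasing towards the diagonal. -/
def IsRobinson (n k : ℕ) (a : Fin n → Fin n → ℕ) : Prop :=
  (∀ u v, a u v = a v u) ∧ (∀ u, a u u = k) ∧ (∀ u v, a u v ≤ k) ∧
    ∀ u v w : Fin n, u < v → v < w → a u w ≤ a u v ∧ a u w ≤ a v w

/-- `d ∈ 𝔻ᵏ`: threshold vectors with `d 1 > d 2 > ⋯ > d k > 0`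
(values outside `{1,…,k}` are irrelevant). -/
def IsThreshold (k : ℕ) (d : ℕ → ℝ) : Prop :=
  (∀ i, 1 ≤ i → i < k → d (i + 1) < d i) ∧ 0 < d k

/-- Uniform embedding: for all pairs `u,v` and all `t ≤ k`,
`a u v = t ↔ d_{t+1} < |f v − f u| ≤ d_t`, with conventions `d_0 = +∞`, `d_{k+1} = −∞`. -/
def IsUnifEmb (n k : ℕ) (a : Fin n → Fin n → ℕ) (d : ℕ → ℝ)
    (f : Fin n → ℝ) : Prop :=
  ∀ u v : Fin n, ∀ t : ℕ, t ≤ k →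
    (a u v = t ↔ (t = k ∨ d (t + 1) < |f v - f u|) ∧ (t = 0 ∨ |f v - f u| ≤ d t))

/-- The strict inequality system: for all `u < v` and all `t ≤ k`,
`a u v = t ↔ d_{t+1} < f v − f u < d_t`, with conventions `d_0 = +∞`, `d_{k+1} = 0`. -/
def SatisfiesStrict (n k : ℕ) (a : Fin n → Fin n → ℕ) (d : ℕ → ℝ)
    (f : Fin n → ℝ) : Prop :=
  ∀ u v : Fin n, u < v → ∀ t : ℕ, t ≤ k →
    (a u v = t ↔ ((if t = k then (0 : ℝ) else d (t + 1)) < f v - f u) ∧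
      (t = 0 ∨ f v - f u < d t))

/-- `β⁺(x,y)`: for `x < y`, `β⁺(x,y) = χ_{a x y}` (junk value `χ_0` when `a x y = 0`,
where it is undefined); for `x > y`, `β⁺(x,y) = −β⁻(y,x)`. -/
def betaP {n : ℕ} (k : ℕ) (a : Fin n → Fin n → ℕ) (x y : Fin n) : ℕ → ℤ :=
  if x < y then chi (a x y)
  else if y < x then (if a x y = k then 0 else -chi (a x y + 1))
  else 0

/-- `β⁻(x,y)`: for `x < y`, `β⁻(x,y) = χ_{a x y + 1}` if `a x y < k` and `0` if `a x y = k`;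
for `x > y`, `β⁻(x,y) = −β⁺(y,x)`. -/
def betaM {n : ℕ} (k : ℕ) (a : Fin n → Fin n → ℕ) (x y : Fin n) : ℕ → ℤ :=
  if x < y then (if a x y = k then 0 else chi (a x y + 1))
  else if y < x then -chi (a x y)
  else 0

/-- `β⁺(W) = Σ_i β⁺(w_{i−1}, w_i)` over the steps of the walk `W`. -/
def betaPWalk {n : ℕ} (k : ℕ) (a : Fin n → Fin n → ℕ) (w : List (Fin n)) : ℕ → ℤ :=
  ((w.zip w.tail).map fun p => betaP k a p.1 p.2).sum

/-- `β⁻(W) = Σ_i β⁻(w_{i−1}, w_i)` over the steps of the walk `W`. -/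
def betaMWalk {n : ℕ} (k : ℕ) (a : Fin n → Fin n → ℕ) (w : List (Fin n)) : ℕ → ℤ :=
  ((w.zip w.tail).map fun p => betaM k a p.1 p.2).sum

/-- A `(u,v)`-upper-bound-walk: a walk from `u` to `v` with consecutive entries distinct,
in which every increasing step is an edge (`a x y ≥ 1`). -/
def IsUBWalk {n : ℕ} (a : Fin n → Fin n → ℕ) (u v : Fin n) (w : List (Fin n)) : Prop :=
  w.head? = some u ∧ w.getLast? = some v ∧
    List.Chain' (fun x y => x ≠ y ∧ (x < y → 1 ≤ a x y)) w

/-- A `(u,v)`-lower-bound-walk: a walk from `u` to `v` with consecutive entries distinct,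
in which every decreasing step is an edge (`a x y ≥ 1`). -/
def IsLBWalk {n : ℕ} (a : Fin n → Fin n → ℕ) (u v : Fin n) (w : List (Fin n)) : Prop :=
  w.head? = some u ∧ w.getLast? = some v ∧
    List.Chain' (fun x y => x ≠ y ∧ (y < x → 1 ≤ a x y)) w

/-- An upper-bound-cycle: a `(u,u)`-upper-bound-walk of length `p ≥ 2` in which
`u = w_0 = w_p` is the only repeated vertex. -/
def IsUBCycle {n : ℕ} (a : Fin n → Fin n → ℕ) (w : List (Fin n)) : Prop :=
  ∃ u : Fin n, IsUBWalk a u u w ∧ 3 ≤ w.length ∧ w.dropLast.Nodup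

/-- The path condition for `A` and `d`: for all `u < v`, every `(u,v)`-upper-bound-path `W₁`
and every `(u,v)`-lower-bound-path `W₂` satisfy `β⁻(W₂)ᵀ d < β⁺(W₁)ᵀ d`. -/
def PathCondition (n k : ℕ) (a : Fin n → Fin n → ℕ) (d : ℕ → ℝ) : Prop :=
  ∀ u v : Fin n, u < v → ∀ w₁ w₂ : List (Fin n),
    IsUBWalk a u v w₁ → w₁.Nodup → IsLBWalk a u v w₂ → w₂.Nodup →
      dotProd k (betaMWalk k a w₂) d < dotProd k (betaPWalk k a w₁) d

/-- The prefix-sum partial order `⪯` on `ℤᵏ`. -/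
def Preceq (k : ℕ) (x y : ℕ → ℤ) : Prop :=
  ∀ t, 1 ≤ t → t ≤ k → ∑ i ∈ Finset.Icc 1 t, x i ≤ ∑ i ∈ Finset.Icc 1 t, y i

/-!
Induction on the total length of the two walks. For two paths this is the path condition, after
reversing both walks when `u > v`: by symmetry of `A`, reversing a walk exchanges upper- and
lower-bound-walks and turns `β⁺` into `-β⁻`. A walk with a repeated vertex is a shorter walk with
a closed walk `x → y ⇝ x` spliced in, and that closed walk has positive weight: the step `[x, y]`
and the reversed remainder `x ⇝ y` are an upper- and a lower-bound-walk between `x ≠ y`, so the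
induction hypothesis applies to them. So the inequality for the shorter walk implies it for the
original one.
-/

namespace List

variable {α M : Type*}

theorem exists_eq_append_cons_append_cons_of_not_nodup {l : List α} (h : ¬l.Nodup) :
    ∃ P x M S, l = P ++ x :: (M ++ x :: S) := by
  obtain ⟨x, hx⟩ : ∃ x, [x, x] <+ l := by simpa [nodup_iff_sublist] using h
  obtain ⟨r₁, r₂, rfl, hx₁, hx₂⟩ := cons_sublist_iff.1 hx
  obtain ⟨P, M₁, rfl⟩ := append_of_mem hx₁
  obtain ⟨M₂, S, rfl⟩ := append_of_mem (singleton_sublist.1 hx₂)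
  exact ⟨P, x, M₁ ++ M₂, S, by simp⟩

theorem two_le_length_of_head?_of_getLast? {l : List α} {u v : α} (hu : l.head? = some u)
    (hv : l.getLast? = some v) (huv : u ≠ v) : 2 ≤ l.length := by
  match l, hu, hv with
  | [_], rfl, hv => exact absurd (Option.some.inj hv) huv
  | _ :: _ :: _, _, _ => simp

theorem exists_cycle_of_isChain_of_not_nodup {R : α → α → Prop} (hR : ∀ x, ¬R x x)
    {l : List α} (hl : l.IsChain R) (hnd : ¬l.Nodup) :
    ∃ P x y M S, l = P ++ x :: y :: (M ++ x :: S) ∧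
      (P ++ x :: S).IsChain R ∧ R x y ∧ (y :: (M ++ [x])).IsChain R := by
  obtain ⟨P, x, M, S, rfl⟩ := exists_eq_append_cons_append_cons_of_not_nodup hnd
  obtain ⟨hP, hx⟩ := isChain_split.1 hl
  rw [← cons_append, isChain_split] at hx
  cases M with
  | nil => exact absurd (isChain_pair.1 hx.1) (hR x)
  | cons y M =>
    obtain ⟨hxy, hcycle⟩ := isChain_cons_cons.1 hx.1
    exact ⟨P, x, y, M, S, rfl, isChain_split.2 ⟨hP, hx.2⟩, hxy, by simpa using hcycle⟩

variable [AddCommMonoid M]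

def stepSum (f : α → α → M) (l : List α) : M :=
  ((l.zip l.tail).map fun p => f p.1 p.2).sum

variable (f : α → α → M)

@[simp]
theorem stepSum_nil : stepSum f [] = 0 := rfl

@[simp]
theorem stepSum_singleton (x : α) : stepSum f [x] = 0 := rfl

@[simp]
theorem stepSum_cons_cons (x y : α) (l : List α) :
    stepSum f (x :: y :: l) = f x y + stepSum f (y :: l) := by
  simp [stepSum]

theorem stepSum_append_cons (l₁ : List α) (x : α) (l₂ : List α) :
    stepSum f (l₁ ++ x :: l₂) = stepSum f (l₁ ++ [x]) + stepSum f (x :: l₂) := by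
  induction l₁ with
  | nil => simp
  | cons y l₁ ih =>
    cases l₁ with
    | nil => cases l₂ <;> simp
    | cons z l₁ => simp only [cons_append, stepSum_cons_cons] at ih ⊢; rw [ih, add_assoc]

theorem stepSum_reverse (l : List α) : stepSum f l.reverse = stepSum (fun x y => f y x) l := by
  induction l with
  | nil => rfl
  | cons x l ih =>
    cases l with
    | nil => rfl
    | cons y l =>
      rw [reverse_cons, reverse_cons, append_assoc, singleton_append, stepSum_append_cons,
        ← reverse_cons, ih]
      simp [add_comm]

theorem stepSum_neg {G : Type*} [AddCommGroup G] (g : α → α → G) (l : List α) :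
    stepSum (fun x y => -g x y) l = -stepSum g l := by
  simp [stepSum, sum_neg, Function.comp_def]

theorem stepSum_append_cons_append_cons (P : List α) (x : α) (M S : List α) :
    stepSum f (P ++ x :: (M ++ x :: S)) =
      stepSum f (P ++ x :: S) + stepSum f (x :: (M ++ [x])) := by
  rw [stepSum_append_cons, stepSum_append_cons f P x S, ← cons_append,
    stepSum_append_cons f (x :: M)]
  simp only [cons_append]
  ac_rfl

end List

section Robinson

variable {n k : ℕ} {a : Fin n → Fin n → ℕ} {d : ℕ → ℝ}

theorem dotProd_add (b₁ b₂ : ℕ → ℤ) :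
    dotProd k (b₁ + b₂) d = dotProd k b₁ d + dotProd k b₂ d := by
  simp [dotProd, add_mul, Finset.sum_add_distrib]

theorem dotProd_neg (b : ℕ → ℤ) : dotProd k (-b) d = -dotProd k b d := by
  simp [dotProd, Finset.sum_neg_distrib]

theorem betaPWalk_eq_stepSum (w : List (Fin n)) : betaPWalk k a w = w.stepSum (betaP k a) := rfl

theorem betaMWalk_eq_stepSum (w : List (Fin n)) : betaMWalk k a w = w.stepSum (betaM k a) := rfl

theorem betaPWalk_pair (x y : Fin n) : betaPWalk k a [x, y] = betaP k a x y := by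
  simp [betaPWalk_eq_stepSum]

theorem betaM_swap (hsym : ∀ u v, a u v = a v u) (x y : Fin n) :
    betaM k a y x = -betaP k a x y := by
  rcases lt_trichotomy x y with h | rfl | h
  · simp [betaM, betaP, h, h.asymm, hsym y x]
  · simp [betaM, betaP]
  · simp only [betaM, betaP, h, h.asymm, if_true, if_false, hsym y x]
    split <;> simp

theorem betaMWalk_reverse (hsym : ∀ u v, a u v = a v u) (w : List (Fin n)) :
    betaMWalk k a w.reverse = -betaPWalk k a w := by
  simp only [betaMWalk_eq_stepSum, betaPWalk_eq_stepSum, List.stepSum_reverse, betaM_swap hsym,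
    List.stepSum_neg]

theorem betaPWalk_reverse (hsym : ∀ u v, a u v = a v u) (w : List (Fin n)) :
    betaPWalk k a w.reverse = -betaMWalk k a w := by
  rw [← w.reverse_reverse, betaMWalk_reverse hsym, w.reverse_reverse, neg_neg]

theorem dotProd_betaMWalk_lt_iff_reverse (hsym : ∀ u v, a u v = a v u) (w₁ w₂ : List (Fin n)) :
    dotProd k (betaMWalk k a w₂) d < dotProd k (betaPWalk k a w₁) d ↔
      dotProd k (betaMWalk k a w₁.reverse) d < dotProd k (betaPWalk k a w₂.reverse) d := by
  rw [betaMWalk_reverse hsym, betaPWalk_reverse hsym, dotProd_neg, dotProd_neg, neg_lt_neg_iff]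

theorem IsUBWalk.reverse (hsym : ∀ u v, a u v = a v u) {u v : Fin n} {w : List (Fin n)}
    (h : IsUBWalk a u v w) : IsLBWalk a v u w.reverse := by
  obtain ⟨hh, hl, hc⟩ := h
  refine ⟨by rwa [List.head?_reverse], by rwa [List.getLast?_reverse], ?_⟩
  exact List.isChain_reverse.2 (hc.imp fun x y hxy => ⟨hxy.1.symm, hsym y x ▸ hxy.2⟩)

theorem IsLBWalk.reverse (hsym : ∀ u v, a u v = a v u) {u v : Fin n} {w : List (Fin n)}
    (h : IsLBWalk a u v w) : IsUBWalk a v u w.reverse := by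
  obtain ⟨hh, hl, hc⟩ := h
  refine ⟨by rwa [List.head?_reverse], by rwa [List.getLast?_reverse], ?_⟩
  exact List.isChain_reverse.2 (hc.imp fun x y hxy => ⟨hxy.1.symm, hsym y x ▸ hxy.2⟩)

theorem IsUBWalk.exists_cycle {u v : Fin n} {w : List (Fin n)} (h : IsUBWalk a u v w)
    (hnd : ¬w.Nodup) :
    ∃ w' c x y, IsUBWalk a u v w' ∧ IsUBWalk a x y [x, y] ∧ IsUBWalk a y x c ∧
      w'.length < w.length ∧ c.length < w.length ∧ x ≠ y ∧
      betaPWalk k a w = betaPWalk k a w' + (betaP k a x y + betaPWalk k a c) := by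
  obtain ⟨hh, hl, hc⟩ := h
  obtain ⟨P, x, y, M, S, rfl, hP, hxy, hcycle⟩ :=
    List.exists_cycle_of_isChain_of_not_nodup (fun x hx => hx.1 rfl) hc hnd
  refine ⟨P ++ x :: S, y :: (M ++ [x]), x, y, ⟨?_, ?_, hP⟩, ⟨rfl, rfl, List.isChain_pair.2 hxy⟩,
    ⟨rfl, by rw [← List.cons_append, List.getLast?_concat], hcycle⟩, by simp; omega,
    by simp; omega, hxy.1, ?_⟩
  · cases P <;> simpa using hh
  · rwa [show P ++ x :: y :: (M ++ x :: S) = (P ++ x :: y :: M) ++ x :: S by simp,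
      List.getLast?_append_cons, ← List.getLast?_append_cons P] at hl
  · rw [betaPWalk_eq_stepSum, ← List.cons_append, List.stepSum_append_cons_append_cons,
      List.cons_append, List.stepSum_cons_cons]
    rfl

def WalkConditionBelow (k : ℕ) (a : Fin n → Fin n → ℕ) (d : ℕ → ℝ) (N : ℕ) : Prop :=
  ∀ u v : Fin n, ∀ w₁ w₂ : List (Fin n), w₁.length + w₂.length < N → u ≠ v →
    IsUBWalk a u v w₁ → IsLBWalk a u v w₂ →
      dotProd k (betaMWalk k a w₂) d < dotProd k (betaPWalk k a w₁) d

namespace WalkConditionBelow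

variable {u v : Fin n} {w₁ w₂ : List (Fin n)}

theorem lt_of_not_nodup_left (hsym : ∀ u v, a u v = a v u)
    (IH : WalkConditionBelow k a d (w₁.length + w₂.length)) (huv : u ≠ v)
    (h₁ : IsUBWalk a u v w₁) (h₂ : IsLBWalk a u v w₂) (hnd : ¬w₁.Nodup) :
    dotProd k (betaMWalk k a w₂) d < dotProd k (betaPWalk k a w₁) d := by
  obtain ⟨w', c, x, y, h', hxy, hc, hw', hc', hne, hsum⟩ := h₁.exists_cycle (k := k) hnd
  have hw₂ : 2 ≤ w₂.length := List.two_le_length_of_head?_of_getLast? h₂.1 h₂.2.1 huv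
  have hcycle := IH x y [x, y] c.reverse (by simp; omega) hne hxy (hc.reverse hsym)
  have hshort := IH u v w' w₂ (by omega) huv h' h₂
  rw [betaPWalk_pair, betaMWalk_reverse hsym, dotProd_neg] at hcycle
  rw [hsum, dotProd_add, dotProd_add]
  linarith

theorem lt_of_not_nodup_right (hsym : ∀ u v, a u v = a v u)
    (IH : WalkConditionBelow k a d (w₁.length + w₂.length)) (huv : u ≠ v)
    (h₁ : IsUBWalk a u v w₁) (h₂ : IsLBWalk a u v w₂) (hnd : ¬w₂.Nodup) :
    dotProd k (betaMWalk k a w₂) d < dotProd k (betaPWalk k a w₁) d := by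
  rw [dotProd_betaMWalk_lt_iff_reverse hsym]
  refine lt_of_not_nodup_left hsym ?_ huv.symm (h₂.reverse hsym) (h₁.reverse hsym)
    (by rwa [List.nodup_reverse])
  simpa only [List.length_reverse, add_comm] using IH

end WalkConditionBelow

theorem PathCondition.dotProd_betaMWalk_lt_of_nodup (hsym : ∀ u v, a u v = a v u)
    (hpc : PathCondition n k a d) {u v : Fin n} (huv : u ≠ v) {w₁ w₂ : List (Fin n)}
    (h₁ : IsUBWalk a u v w₁) (h₂ : IsLBWalk a u v w₂) (hnd₁ : w₁.Nodup) (hnd₂ : w₂.Nodup) :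
    dotProd k (betaMWalk k a w₂) d < dotProd k (betaPWalk k a w₁) d := by
  rcases huv.lt_or_gt with h | h
  · exact hpc u v h w₁ w₂ h₁ hnd₁ h₂ hnd₂
  · rw [dotProd_betaMWalk_lt_iff_reverse hsym]
    exact hpc v u h _ _ (h₂.reverse hsym) (List.nodup_reverse.2 hnd₂) (h₁.reverse hsym)
      (List.nodup_reverse.2 hnd₁)

theorem PathCondition.dotProd_betaMWalk_lt (hsym : ∀ u v, a u v = a v u)
    (hpc : PathCondition n k a d) {u v : Fin n} (huv : u ≠ v) {w₁ w₂ : List (Fin n)}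
    (h₁ : IsUBWalk a u v w₁) (h₂ : IsLBWalk a u v w₂) :
    dotProd k (betaMWalk k a w₂) d < dotProd k (betaPWalk k a w₁) d := by
  induction hN : w₁.length + w₂.length using Nat.strong_induction_on generalizing u v w₁ w₂ with
  | _ N ih =>
  have IH : WalkConditionBelow k a d (w₁.length + w₂.length) :=
    fun u' v' w₁' w₂' hlt huv' h₁' h₂' => ih _ (hN ▸ hlt) huv' h₁' h₂' rfl
  by_cases hnd₁ : w₁.Nodup
  · by_cases hnd₂ : w₂.Nodup
    · exact hpc.dotProd_betaMWalk_lt_of_nodup hsym huv h₁ h₂ hnd₁ hnd₂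
    · exact IH.lt_of_not_nodup_right hsym huv h₁ h₂ hnd₂
  · exact IH.lt_of_not_nodup_left hsym huv h₁ h₂ hnd₁

end Robinson

theorem statement7_general (n k : ℕ) (a : Fin n → Fin n → ℕ)
    (hA : IsRobinson n k a) (d : ℕ → ℝ)
    (hpc : PathCondition n k a d) (u v : Fin n) (huv : u ≠ v)
    (w₁ w₂ : List (Fin n)) (h₁ : IsUBWalk a u v w₁) (h₂ : IsLBWalk a u v w₂) :
    dotProd k (betaMWalk k a w₂) d < dotProd k (betaPWalk k a w₁) d :=
  hpc.dotProd_betaMWalk_lt hA.1 huv h₁ h₂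

/-- Corollary 1: if `d ∈ 𝔻ᵏ` satisfies the path condition for `A`, then
for every pair `u ≠ v`, every `(u,v)`-upper-bound-walk `W₁` and every
`(u,v)`-lower-bound-walk `W₂` satisfy `β⁻(W₂)ᵀ d < β⁺(W₁)ᵀ d`. -/
theorem statement7 (n k : ℕ) (hn : 1 ≤ n) (hk : 1 ≤ k) (a : Fin n → Fin n → ℕ)
    (hA : IsRobinson n k a) (d : ℕ → ℝ) (hd : IsThreshold k d)
    (hpc : PathCondition n k a d) (u v : Fin n) (huv : u ≠ v)
    (w₁ w₂ : List (Fin n)) (h₁ : IsUBWalk a u v w₁) (h₂ : IsLBWalk a u v w₂) :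
    dotProd k (betaMWalk k a w₂) d < dotProd k (betaPWalk k a w₁) d :=
  statement7_general n k a hA d hpc u v huv w₁ w₂ h₁ h₂
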